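/- Let m ≥ 1 and let A, u be smooth functions on a domain in ℝ^{2m} (A matrix-valued, u vector-valued). Then δΔ^{m-1}(A du) = δ(A Δ^{m-1} du) + Σ_{i=1}^{m-1} δ^i ( Σ_{j=m-i}^{m} c_{ij} ∇^j A · ∇^{2m-i-j} u ) for suitable universal integer constants c_{ij}, where each term ∇^j A ∇^{2m-i-j} u denotes a bilinear contraction of the j-th derivatives of A with the (2m-i-j)-th derivatives of u. -/

import Mathlib

open MeasureTheory Set Filter
open scoped ENNReal Topology

noncomputable section

abbrev Euc (n : ℕ) := EuclideanSpace ℝ (Fin n)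

/-- Iterated partial derivatives along a list of coordinate directions. -/
noncomputable def iterP {n : ℕ} : List (Fin n) → (Euc n → ℝ) → (Euc n → ℝ)
  | [], f => f
  | i :: l, f => fun x => fderiv ℝ (iterP l f) x (EuclideanSpace.single i 1)

/-- A test function for the domain `Ω`. -/
def IsTest {n : ℕ} (Ω : Set (Euc n)) (φ : Euc n → ℝ) : Prop :=
  ContDiff ℝ (⊤ : ℕ∞) φ ∧ HasCompactSupport φ ∧ tsupport φ ⊆ Ω

/-- `v` is the weak (distributional) partial derivative of `u` of order `d` on `Ω`. -/
def IsWeakDeriv {n : ℕ} (Ω : Set (Euc n)) (u : Euc n → ℝ) (d : List (Fin n)) (v : Euc n → ℝ) : Prop :=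
  ∀ φ : Euc n → ℝ, IsTest Ω φ →
    ∫ x in Ω, u x * iterP d φ x = (-1 : ℝ) ^ d.length * ∫ x in Ω, v x * φ x

/-- Membership in the Sobolev space `W^{k,p}(Ω)`. -/
def MemSob {n : ℕ} (k : ℕ) (p : ℝ≥0∞) (Ω : Set (Euc n)) (u : Euc n → ℝ) : Prop :=
  ∃ D : List (Fin n) → Euc n → ℝ, D [] = u ∧
    ∀ d : List (Fin n), d.length ≤ k →
      IsWeakDeriv Ω u d (D d) ∧ MemLp (D d) p (volume.restrict Ω)

/-- The Laplacian (sum of second pure partials). -/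
noncomputable def lap {n : ℕ} (f : Euc n → ℝ) : Euc n → ℝ :=
  fun x => ∑ i : Fin n, iterP [i, i] f x

/-- Iterated Laplacian `Δ^k`. -/
noncomputable def lapIter {n : ℕ} : ℕ → (Euc n → ℝ) → (Euc n → ℝ)
  | 0, f => f
  | k + 1, f => lap (lapIter k f)

section Base
variable {N : ℕ} {Ω : Set (Euc N)}

theorem iterP_nil (f : Euc N → ℝ) : iterP [] f = f := rfl

theorem iterP_append (l₁ l₂ : List (Fin N)) (f : Euc N → ℝ) :
    iterP (l₁ ++ l₂) f = iterP l₁ (iterP l₂ f) := by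
  induction l₁ with
  | nil => rfl
  | cons i l ih => simp [iterP, ih]

theorem iterP_contDiffOn (hΩ : IsOpen Ω) {f : Euc N → ℝ} (hf : ContDiffOn ℝ (⊤ : ℕ∞) f Ω)
    (l : List (Fin N)) : ContDiffOn ℝ (⊤ : ℕ∞) (iterP l f) Ω := by
  induction l with
  | nil => exact hf
  | cons i l ih =>
    have h1 : ContDiffOn ℝ (⊤ : ℕ∞) (fderivWithin ℝ (iterP l f) Ω) Ω :=
      ih.fderivWithin hΩ.uniqueDiffOn (by simp)
    have h2 : ContDiffOn ℝ (⊤ : ℕ∞)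
        (fun x => fderivWithin ℝ (iterP l f) Ω x (EuclideanSpace.single i 1)) Ω :=
      h1.clm_apply contDiffOn_const
    exact h2.congr fun x hx => by
      show fderiv ℝ (iterP l f) x _ = _
      rw [fderivWithin_of_isOpen hΩ hx]

theorem iterP_diffAt (hΩ : IsOpen Ω) {f : Euc N → ℝ} (hf : ContDiffOn ℝ (⊤ : ℕ∞) f Ω)
    (l : List (Fin N)) {x : Euc N} (hx : x ∈ Ω) : DifferentiableAt ℝ (iterP l f) x :=
  ((iterP_contDiffOn hΩ hf l x hx).contDiffAt (hΩ.mem_nhds hx)).differentiableAt (by simp)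

theorem iterP_congr (hΩ : IsOpen Ω) {f g : Euc N → ℝ} (h : ∀ y ∈ Ω, f y = g y)
    (l : List (Fin N)) : ∀ x ∈ Ω, iterP l f x = iterP l g x := by
  induction l with
  | nil => exact h
  | cons i l ih =>
    intro x hx
    show fderiv ℝ (iterP l f) x _ = fderiv ℝ (iterP l g) x _
    have : iterP l f =ᶠ[𝓝 x] iterP l g := by
      filter_upwards [hΩ.mem_nhds hx] using ih
    rw [this.fderiv_eq]

theorem iterP_add (hΩ : IsOpen Ω) {f g : Euc N → ℝ} (hf : ContDiffOn ℝ (⊤ : ℕ∞) f Ω)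
    (hg : ContDiffOn ℝ (⊤ : ℕ∞) g Ω) (l : List (Fin N)) :
    ∀ x ∈ Ω, iterP l (fun y => f y + g y) x = iterP l f x + iterP l g x := by
  induction l with
  | nil => intro x _; rfl
  | cons i l ih =>
    intro x hx
    show fderiv ℝ (iterP l fun y => f y + g y) x _ = _
    have h1 : iterP l (fun y => f y + g y) =ᶠ[𝓝 x]
        (fun y => iterP l f y + iterP l g y) := by
      filter_upwards [hΩ.mem_nhds hx] using ih
    rw [h1.fderiv_eq, fderiv_fun_add (iterP_diffAt hΩ hf l hx) (iterP_diffAt hΩ hg l hx)]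
    rfl

theorem iterP_const_mul (hΩ : IsOpen Ω) {f : Euc N → ℝ} (hf : ContDiffOn ℝ (⊤ : ℕ∞) f Ω)
    (c : ℝ) (l : List (Fin N)) :
    ∀ x ∈ Ω, iterP l (fun y => c * f y) x = c * iterP l f x := by
  induction l with
  | nil => intro x _; rfl
  | cons i l ih =>
    intro x hx
    show fderiv ℝ (iterP l fun y => c * f y) x _ = _
    have h1 : iterP l (fun y => c * f y) =ᶠ[𝓝 x] (fun y => c * iterP l f y) := by
      filter_upwards [hΩ.mem_nhds hx] using ih
    rw [h1.fderiv_eq, fderiv_const_mul (iterP_diffAt hΩ hf l hx) c]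
    rfl

theorem iterP_mul (hΩ : IsOpen Ω) {f g : Euc N → ℝ} (hf : ContDiffOn ℝ (⊤ : ℕ∞) f Ω)
    (hg : ContDiffOn ℝ (⊤ : ℕ∞) g Ω) (k : Fin N) {x : Euc N} (hx : x ∈ Ω) :
    iterP [k] (fun y => f y * g y) x = iterP [k] f x * g x + f x * iterP [k] g x := by
  have df : DifferentiableAt ℝ f x := iterP_diffAt hΩ hf [] hx
  have dg : DifferentiableAt ℝ g x := iterP_diffAt hΩ hg [] hx
  show fderiv ℝ (fun y => f y * g y) x _ = _
  rw [fderiv_fun_mul df dg]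
  show f x * fderiv ℝ g x _ + g x * fderiv ℝ f x _ = _
  show f x * iterP [k] g x + g x * iterP [k] f x = _
  ring

theorem iterP_zero (l : List (Fin N)) : iterP l (fun _ => (0:ℝ)) = fun _ => 0 := by
  induction l with
  | nil => rfl
  | cons i l ih => funext x; show fderiv ℝ (iterP l fun _ => (0:ℝ)) x _ = 0; rw [ih]; simp

theorem iterP_one (l : List (Fin N)) (hl : l ≠ []) :
    iterP l (fun _ => (1:ℝ)) = fun _ => 0 := by
  induction l with
  | nil => exact absurd rfl hl
  | cons i l ih =>
    funext x
    show fderiv ℝ (iterP l fun _ => (1:ℝ)) x _ = 0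
    rcases eq_or_ne l [] with rfl | h
    · show fderiv ℝ (fun _ => (1:ℝ)) x _ = 0; simp
    · rw [ih h]; simp

theorem iterP_sub (hΩ : IsOpen Ω) {f g : Euc N → ℝ} (hf : ContDiffOn ℝ (⊤ : ℕ∞) f Ω)
    (hg : ContDiffOn ℝ (⊤ : ℕ∞) g Ω) (l : List (Fin N)) :
    ∀ x ∈ Ω, iterP l (fun y => f y - g y) x = iterP l f x - iterP l g x := by
  intro x hx
  have h1 : ∀ y ∈ Ω, f y - g y = f y + (-1:ℝ) * g y := by intro y _; ring
  rw [iterP_congr hΩ h1 l x hx,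
    iterP_add hΩ hf (contDiffOn_const.mul hg) l x hx,
    iterP_const_mul hΩ hg (-1) l x hx]
  ring

theorem contDiffOn_listSum {ι : Type*} (F : ι → Euc N → ℝ)
    (hF : ∀ t, ContDiffOn ℝ (⊤ : ℕ∞) (F t) Ω) (L : List ι) :
    ContDiffOn ℝ (⊤ : ℕ∞) (fun y => (L.map (fun t => F t y)).sum) Ω := by
  induction L with
  | nil => simpa using contDiffOn_const
  | cons s L ih2 => simpa using (hF s).add ih2

theorem iterP_listSum (hΩ : IsOpen Ω) {ι : Type*} (F : ι → Euc N → ℝ)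
    (hF : ∀ t, ContDiffOn ℝ (⊤ : ℕ∞) (F t) Ω) (L : List ι) (l : List (Fin N)) :
    ∀ x ∈ Ω, iterP l (fun y => (L.map (fun t => F t y)).sum) x
      = (L.map (fun t => iterP l (F t) x)).sum := by
  induction L with
  | nil => intro x hx; simpa using congrFun (iterP_zero l) x
  | cons t L ih =>
    intro x hx
    have hL : ContDiffOn ℝ (⊤ : ℕ∞) (fun y => (L.map (fun t => F t y)).sum) Ω :=
      contDiffOn_listSum F hF L
    simp only [List.map_cons, List.sum_cons]
    rw [iterP_add hΩ (hF t) hL l x hx, ih x hx]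

theorem iterP_finsetSum (hΩ : IsOpen Ω) {ι : Type*} (F : ι → Euc N → ℝ)
    (hF : ∀ t, ContDiffOn ℝ (⊤ : ℕ∞) (F t) Ω) (s : Finset ι) (l : List (Fin N)) :
    ∀ x ∈ Ω, iterP l (fun y => ∑ t ∈ s, F t y) x = ∑ t ∈ s, iterP l (F t) x := by
  classical
  induction s using Finset.cons_induction with
  | empty => intro x hx; simpa using congrFun (iterP_zero l) x
  | cons t s hts ih =>
    intro x hx
    have hL : ContDiffOn ℝ (⊤ : ℕ∞) (fun y => ∑ t ∈ s, F t y) Ω :=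
      ContDiffOn.sum (fun i _ => hF i)
    have h1 : ∀ y ∈ Ω, (∑ r ∈ Finset.cons t s hts, F r y) = F t y + ∑ r ∈ s, F r y := by
      intro y _; rw [Finset.sum_cons]
    rw [iterP_congr hΩ h1 l x hx, iterP_add hΩ (hF t) hL l x hx, ih x hx,
      Finset.sum_cons]

end Base

section Atoms

structure Atm (N : ℕ) where
  e : List (Fin N)
  a : List (Fin N)
  b : List (Fin N)
  c : ℤ
deriving DecidableEq

variable {N : ℕ} {Ω : Set (Euc N)}

/-- Evaluation of an atom. -/
def aeval (A u : Euc N → ℝ) (t : Atm N) : Euc N → ℝ :=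
  fun x => (t.c : ℝ) * iterP t.e (fun y => iterP t.a A y * iterP t.b u y) x

def leval (A u : Euc N → ℝ) (L : List (Atm N)) : Euc N → ℝ :=
  fun x => (L.map (fun t => aeval A u t x)).sum

theorem leval_flatMap {ι : Type*} (A u : Euc N → ℝ) (L : List ι) (f : ι → List (Atm N))
    (x : Euc N) :
    leval A u (L.flatMap f) x = (L.map (fun t => leval A u (f t) x)).sum := by
  induction L with
  | nil => rfl
  | cons t L ih =>
    simp only [List.flatMap_cons, List.map_cons, List.sum_cons, ← ih]
    simp [leval]

theorem list_finset_swap {ι κ : Type*} (L : List ι) (s : Finset κ) (h : κ → ι → ℝ) :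
    (L.map (fun t => ∑ j ∈ s, h j t)).sum = ∑ j ∈ s, (L.map (h j)).sum := by
  induction L with
  | nil => simp
  | cons t L ih => simp [ih, Finset.sum_add_distrib]

/-- Leibniz step: one derivative on a product atom (with `e = []`). -/
def dStep (k : Fin N) (t : Atm N) : List (Atm N) :=
  [⟨[], k :: t.a, t.b, t.c⟩, ⟨[], t.a, k :: t.b, t.c⟩]

theorem dStep_e (k : Fin N) (t s : Atm N) (hs : s ∈ dStep k t) : s.e = [] := by
  simp [dStep] at hs
  rcases hs with rfl | rfl <;> rfl

theorem dStep_len (k : Fin N) (t s : Atm N) (hs : s ∈ dStep k t) :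
    s.a.length + s.b.length = t.a.length + t.b.length + 1 := by
  simp [dStep] at hs
  rcases hs with rfl | rfl <;> simp <;> omega

def lapStep (t : Atm N) : List (Atm N) :=
  (List.finRange N).flatMap (fun j => (dStep j t).flatMap (dStep j))

theorem lapStep_e (t s : Atm N) (hs : s ∈ lapStep t) : s.e = [] := by
  simp only [lapStep, List.mem_flatMap] at hs
  obtain ⟨j, -, s', hs', hss⟩ := hs
  exact dStep_e j s' s hss

theorem lapStep_len (t s : Atm N) (hs : s ∈ lapStep t) :
    s.a.length + s.b.length = t.a.length + t.b.length + 2 := by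
  simp only [lapStep, List.mem_flatMap] at hs
  obtain ⟨j, -, s', hs', hss⟩ := hs
  rw [dStep_len j s' s hss, dStep_len j t s' hs']

/-- Phase-1 atom list: expansion of `Δⁿ(A·u)`. -/
def phase1 (N n : ℕ) : List (Atm N) :=
  (fun L => L.flatMap lapStep)^[n] [⟨[], [], [], 1⟩]

theorem phase1_succ (n : ℕ) : phase1 N (n + 1) = (phase1 N n).flatMap lapStep := by
  rw [phase1, phase1, Function.iterate_succ_apply']

theorem phase1_shape (n : ℕ) :
    ∀ t ∈ phase1 N n, t.e = [] ∧ t.a.length + t.b.length = 2 * n := by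
  induction n with
  | zero => intro t ht; simp [phase1] at ht; subst ht; exact ⟨rfl, rfl⟩
  | succ n ih =>
    intro t ht
    rw [phase1_succ] at ht
    simp only [List.mem_flatMap] at ht
    obtain ⟨s, hs, hts⟩ := ht
    obtain ⟨he, hlen⟩ := ih s hs
    exact ⟨lapStep_e s t hts, by rw [lapStep_len s t hts, hlen]; ring⟩

variable {A u : Euc N → ℝ}

theorem prod_contDiffOn (hΩ : IsOpen Ω) (hA : ContDiffOn ℝ (⊤ : ℕ∞) A Ω) (hu : ContDiffOn ℝ (⊤ : ℕ∞) u Ω)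
    (a b : List (Fin N)) :
    ContDiffOn ℝ (⊤ : ℕ∞) (fun y => iterP a A y * iterP b u y) Ω :=
  (iterP_contDiffOn hΩ hA a).mul (iterP_contDiffOn hΩ hu b)

theorem aeval_contDiffOn (hΩ : IsOpen Ω) (hA : ContDiffOn ℝ (⊤ : ℕ∞) A Ω) (hu : ContDiffOn ℝ (⊤ : ℕ∞) u Ω)
    (t : Atm N) : ContDiffOn ℝ (⊤ : ℕ∞) (aeval A u t) Ω :=
  contDiffOn_const.mul (iterP_contDiffOn hΩ (prod_contDiffOn hΩ hA hu t.a t.b) t.e)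

theorem leval_contDiffOn (hΩ : IsOpen Ω) (hA : ContDiffOn ℝ (⊤ : ℕ∞) A Ω) (hu : ContDiffOn ℝ (⊤ : ℕ∞) u Ω)
    (L : List (Atm N)) : ContDiffOn ℝ (⊤ : ℕ∞) (leval A u L) Ω :=
  contDiffOn_listSum _ (fun t => aeval_contDiffOn hΩ hA hu t) L

/-- Differentiating an atom from outside just prepends to `e`. -/
theorem iterP_aeval (hΩ : IsOpen Ω) (hA : ContDiffOn ℝ (⊤ : ℕ∞) A Ω) (hu : ContDiffOn ℝ (⊤ : ℕ∞) u Ω)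
    (l : List (Fin N)) (t : Atm N) :
    ∀ x ∈ Ω, iterP l (aeval A u t) x = aeval A u ⟨l ++ t.e, t.a, t.b, t.c⟩ x := by
  intro x hx
  unfold aeval
  rw [iterP_const_mul hΩ (iterP_contDiffOn hΩ (prod_contDiffOn hΩ hA hu t.a t.b) t.e) _ l x hx,
    iterP_append]

theorem iterP_leval (hΩ : IsOpen Ω) (hA : ContDiffOn ℝ (⊤ : ℕ∞) A Ω) (hu : ContDiffOn ℝ (⊤ : ℕ∞) u Ω)
    (l : List (Fin N)) (L : List (Atm N)) :
    ∀ x ∈ Ω, iterP l (leval A u L) x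
      = leval A u (L.map (fun t => ⟨l ++ t.e, t.a, t.b, t.c⟩)) x := by
  intro x hx
  unfold leval
  rw [iterP_listSum hΩ (aeval A u) (fun t => aeval_contDiffOn hΩ hA hu t) L l x hx]
  rw [List.map_map]
  apply congrArg
  apply List.map_congr_left
  intro t _
  exact iterP_aeval hΩ hA hu l t x hx

theorem dStep_eval (hΩ : IsOpen Ω) (hA : ContDiffOn ℝ (⊤ : ℕ∞) A Ω) (hu : ContDiffOn ℝ (⊤ : ℕ∞) u Ω)
    (k : Fin N) (t : Atm N) (ht : t.e = []) :
    ∀ x ∈ Ω, iterP [k] (aeval A u t) x = leval A u (dStep k t) x := by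
  intro x hx
  have h1 : aeval A u t = fun y => (t.c : ℝ) * (iterP t.a A y * iterP t.b u y) := by
    funext y; rw [aeval, ht]; rfl
  rw [h1, iterP_const_mul hΩ (prod_contDiffOn hΩ hA hu t.a t.b) _ [k] x hx,
    iterP_mul hΩ (iterP_contDiffOn hΩ hA t.a) (iterP_contDiffOn hΩ hu t.b) k hx]
  have e1 : iterP [k] (iterP t.a A) = iterP (k :: t.a) A := (iterP_append [k] t.a A).symm
  have e2 : iterP [k] (iterP t.b u) = iterP (k :: t.b) u := (iterP_append [k] t.b u).symm
  rw [e1, e2]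
  simp [dStep, leval, aeval, iterP]
  ring

theorem d_leval (hΩ : IsOpen Ω) (hA : ContDiffOn ℝ (⊤ : ℕ∞) A Ω) (hu : ContDiffOn ℝ (⊤ : ℕ∞) u Ω)
    (k : Fin N) (L : List (Atm N)) (hL : ∀ t ∈ L, t.e = []) :
    ∀ x ∈ Ω, iterP [k] (leval A u L) x = leval A u (L.flatMap (dStep k)) x := by
  intro x hx
  unfold leval
  rw [iterP_listSum hΩ (aeval A u) (fun t => aeval_contDiffOn hΩ hA hu t) L [k] x hx]
  rw [show (List.map (fun t => aeval A u t x) (L.flatMap (dStep k))).sum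
      = leval A u (L.flatMap (dStep k)) x from rfl,
    leval_flatMap]
  apply congrArg
  apply List.map_congr_left
  intro t htL
  exact dStep_eval hΩ hA hu k t (hL t htL) x hx

theorem lap_leval (hΩ : IsOpen Ω) (hA : ContDiffOn ℝ (⊤ : ℕ∞) A Ω) (hu : ContDiffOn ℝ (⊤ : ℕ∞) u Ω)
    (L : List (Atm N)) (hL : ∀ t ∈ L, t.e = []) :
    ∀ x ∈ Ω, lap (leval A u L) x = leval A u (L.flatMap lapStep) x := by
  intro x hx
  have key : ∀ j : Fin N, iterP [j, j] (leval A u L) x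
      = leval A u (L.flatMap fun t => (dStep j t).flatMap (dStep j)) x := by
    intro j
    have h1 : ∀ y ∈ Ω, iterP [j] (leval A u L) y = leval A u (L.flatMap (dStep j)) y :=
      d_leval hΩ hA hu j L hL
    have h2 : iterP [j, j] (leval A u L) x = iterP [j] (iterP [j] (leval A u L)) x := rfl
    rw [h2, iterP_congr hΩ h1 [j] x hx,
      d_leval hΩ hA hu j _ (fun s hs => by
        simp only [List.mem_flatMap] at hs
        obtain ⟨t, htL, hst⟩ := hs
        exact dStep_e j t s hst) x hx,
      List.flatMap_assoc]
  calc lap (leval A u L) x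
      = ∑ j : Fin N, iterP [j, j] (leval A u L) x := rfl
    _ = ∑ j : Fin N, (L.map (fun t => leval A u ((dStep j t).flatMap (dStep j)) x)).sum := by
        simp only [key, leval_flatMap]
    _ = (L.map (fun t => ∑ j : Fin N, leval A u ((dStep j t).flatMap (dStep j)) x)).sum :=
        (list_finset_swap L Finset.univ _).symm
    _ = (L.map (fun t => leval A u (lapStep t) x)).sum := by
        apply congrArg; apply List.map_congr_left; intro t _
        rw [lapStep, leval_flatMap, Fin.sum_univ_def]
    _ = leval A u (L.flatMap lapStep) x := (leval_flatMap A u L lapStep x).symm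

theorem M1 (hΩ : IsOpen Ω) (hA : ContDiffOn ℝ (⊤ : ℕ∞) A Ω) (hu : ContDiffOn ℝ (⊤ : ℕ∞) u Ω) (n : ℕ) :
    ∀ x ∈ Ω, lapIter n (fun y => A y * u y) x = leval A u (phase1 N n) x := by
  induction n with
  | zero =>
    intro x hx
    show A x * u x = leval A u [⟨[], [], [], 1⟩] x
    simp [leval, aeval, iterP]
  | succ n ih =>
    intro x hx
    show lap (lapIter n fun y => A y * u y) x = _
    have h1 : ∀ j : Fin N, iterP [j, j] (lapIter n fun y => A y * u y) x
        = iterP [j, j] (leval A u (phase1 N n)) x :=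
      fun j => iterP_congr hΩ ih [j, j] x hx
    show (∑ j : Fin N, iterP [j, j] (lapIter n fun y => A y * u y) x) = _
    simp only [h1]
    have h2 : (∑ j : Fin N, iterP [j, j] (leval A u (phase1 N n)) x)
        = lap (leval A u (phase1 N n)) x := rfl
    rw [h2, lap_leval hΩ hA hu _ (fun t ht => (phase1_shape n t ht).1) x hx, ← phase1_succ]

end Atoms

section Normalize

variable {N : ℕ} {Ω : Set (Euc N)} {A u : Euc N → ℝ}

@[simp] theorem Atm.e_mk (e a b : List (Fin N)) (c : ℤ) : (Atm.mk e a b c).e = e := rfl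
@[simp] theorem Atm.a_mk (e a b : List (Fin N)) (c : ℤ) : (Atm.mk e a b c).a = a := rfl
@[simp] theorem Atm.b_mk (e a b : List (Fin N)) (c : ℤ) : (Atm.mk e a b c).b = b := rfl
@[simp] theorem Atm.c_mk (e a b : List (Fin N)) (c : ℤ) : (Atm.mk e a b c).c = c := rfl

/-- Push one derivative off the `A`-slot (under the outer derivatives `e`). -/
def stepA (t : Atm N) : List (Atm N) :=
  match t.a with
  | [] => [t]
  | a₀ :: a' => [⟨t.e ++ [a₀], a', t.b, t.c⟩, ⟨t.e, a', a₀ :: t.b, -t.c⟩]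

/-- Push one derivative off the `u`-slot (under the outer derivatives `e`). -/
def stepU (t : Atm N) : List (Atm N) :=
  match t.b with
  | [] => [t]
  | b₀ :: b' => [⟨t.e ++ [b₀], t.a, b', t.c⟩, ⟨t.e, b₀ :: t.a, b', -t.c⟩]

theorem stepA_eval (hΩ : IsOpen Ω) (hA : ContDiffOn ℝ (⊤ : ℕ∞) A Ω) (hu : ContDiffOn ℝ (⊤ : ℕ∞) u Ω)
    (t : Atm N) : ∀ x ∈ Ω, aeval A u t x = leval A u (stepA t) x := by
  intro x hx
  rcases ht : t.a with _ | ⟨a₀, a'⟩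
  · simp [stepA, ht, leval]
  · -- inner rewrite: ∂^{a₀::a'}A ∂^b u = ∂_{a₀}(∂^{a'}A ∂^b u) - ∂^{a'}A ∂^{a₀::b}u on Ω
    have inner : ∀ y ∈ Ω, iterP t.a A y * iterP t.b u y
        = iterP [a₀] (fun z => iterP a' A z * iterP t.b u z) y
          - iterP a' A y * iterP (a₀ :: t.b) u y := by
      intro y hy
      rw [iterP_mul hΩ (iterP_contDiffOn hΩ hA a') (iterP_contDiffOn hΩ hu t.b) a₀ hy]
      have e1 : iterP [a₀] (iterP a' A) = iterP (a₀ :: a') A := (iterP_append [a₀] a' A).symm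
      have e2 : iterP [a₀] (iterP t.b u) = iterP (a₀ :: t.b) u := (iterP_append [a₀] t.b u).symm
      rw [e1, e2, ht]
      ring
    have hsm1 : ContDiffOn ℝ (⊤ : ℕ∞) (iterP [a₀] (fun z => iterP a' A z * iterP t.b u z)) Ω :=
      iterP_contDiffOn hΩ (prod_contDiffOn hΩ hA hu a' t.b) [a₀]
    have hsm2 : ContDiffOn ℝ (⊤ : ℕ∞) (fun z => iterP a' A z * iterP (a₀ :: t.b) u z) Ω :=
      prod_contDiffOn hΩ hA hu a' (a₀ :: t.b)
    unfold aeval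
    rw [iterP_congr hΩ inner t.e x hx,
      iterP_sub hΩ hsm1 hsm2 t.e x hx,
      ← iterP_append t.e [a₀]]
    simp only [stepA, ht, leval, aeval, List.map_cons, List.map_nil, List.sum_cons,
      List.sum_nil, Int.cast_neg]
    ring

theorem stepU_eval (hΩ : IsOpen Ω) (hA : ContDiffOn ℝ (⊤ : ℕ∞) A Ω) (hu : ContDiffOn ℝ (⊤ : ℕ∞) u Ω)
    (t : Atm N) : ∀ x ∈ Ω, aeval A u t x = leval A u (stepU t) x := by
  intro x hx
  rcases ht : t.b with _ | ⟨b₀, b'⟩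
  · simp [stepU, ht, leval]
  · have inner : ∀ y ∈ Ω, iterP t.a A y * iterP t.b u y
        = iterP [b₀] (fun z => iterP t.a A z * iterP b' u z) y
          - iterP (b₀ :: t.a) A y * iterP b' u y := by
      intro y hy
      rw [iterP_mul hΩ (iterP_contDiffOn hΩ hA t.a) (iterP_contDiffOn hΩ hu b') b₀ hy]
      have e1 : iterP [b₀] (iterP t.a A) = iterP (b₀ :: t.a) A := (iterP_append [b₀] t.a A).symm
      have e2 : iterP [b₀] (iterP b' u) = iterP (b₀ :: b') u := (iterP_append [b₀] b' u).symm
      rw [e1, e2, ht]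
      ring
    have hsm1 : ContDiffOn ℝ (⊤ : ℕ∞) (iterP [b₀] (fun z => iterP t.a A z * iterP b' u z)) Ω :=
      iterP_contDiffOn hΩ (prod_contDiffOn hΩ hA hu t.a b') [b₀]
    have hsm2 : ContDiffOn ℝ (⊤ : ℕ∞) (fun z => iterP (b₀ :: t.a) A z * iterP b' u z) Ω :=
      prod_contDiffOn hΩ hA hu (b₀ :: t.a) b'
    unfold aeval
    rw [iterP_congr hΩ inner t.e x hx,
      iterP_sub hΩ hsm1 hsm2 t.e x hx,
      ← iterP_append t.e [b₀]]
    simp only [stepU, ht, leval, aeval, List.map_cons, List.map_nil, List.sum_cons,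
      List.sum_nil, Int.cast_neg]
    ring

/-- Fuelled normalization. -/
def nrm (m : ℕ) : ℕ → Atm N → List (Atm N)
  | 0, t => [t]
  | fuel + 1, t =>
    if m < t.a.length then (stepA t).flatMap (nrm m fuel)
    else if t.e.length + t.a.length < m then (stepU t).flatMap (nrm m fuel)
    else [t]

theorem nrm_eval (hΩ : IsOpen Ω) (hA : ContDiffOn ℝ (⊤ : ℕ∞) A Ω) (hu : ContDiffOn ℝ (⊤ : ℕ∞) u Ω)
    (m fuel : ℕ) (t : Atm N) : ∀ x ∈ Ω, aeval A u t x = leval A u (nrm m fuel t) x := by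
  induction fuel generalizing t with
  | zero => intro x hx; simp [nrm, leval]
  | succ fuel ih =>
    intro x hx
    rw [nrm]
    split
    · rw [stepA_eval hΩ hA hu t x hx, leval_flatMap]
      unfold leval
      apply congrArg
      apply List.map_congr_left
      intro s _
      exact ih s x hx
    · split
      · rw [stepU_eval hΩ hA hu t x hx, leval_flatMap]
        unfold leval
        apply congrArg
        apply List.map_congr_left
        intro s _
        exact ih s x hx
      · simp [leval]

/-- Precondition invariant for normalization. -/
def Pre (m : ℕ) (t : Atm N) : Prop :=
  1 ≤ t.e.length ∧ t.e.length ≤ m - 1 ∧ 1 ≤ t.a.length ∧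
    t.e.length + t.a.length + t.b.length = 2 * m ∧ t.e.length + t.a.length ≤ 2 * m - 1

/-- Postcondition: the shape required by the target statement. -/
def Post (m : ℕ) (t : Atm N) : Prop :=
  1 ≤ t.e.length ∧ t.e.length ≤ m - 1 ∧ m - t.e.length ≤ t.a.length ∧
    t.a.length ≤ m ∧ t.e.length + t.a.length + t.b.length = 2 * m

def meas (m : ℕ) (t : Atm N) : ℕ := (t.a.length - m) + (m - (t.e.length + t.a.length))

theorem nrm_post (m fuel : ℕ) (t : Atm N) (hfuel : meas m t ≤ fuel) (hpre : Pre m t) :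
    ∀ s ∈ nrm m fuel t, Post m s := by
  induction fuel generalizing t with
  | zero =>
    intro s hs
    simp only [nrm, List.mem_singleton] at hs
    obtain ⟨h1, h2, h3, h4, h5⟩ := hpre
    have hm : meas m t = 0 := Nat.le_zero.mp hfuel
    unfold meas at hm
    rw [hs]
    exact ⟨h1, h2, by omega, by omega, h4⟩
  | succ fuel ih =>
    intro s hs
    obtain ⟨te, ta, tb, tc⟩ := t
    obtain ⟨h1, h2, h3, h4, h5⟩ := hpre
    simp only [meas] at hfuel
    simp only [Atm.e_mk, Atm.a_mk, Atm.b_mk] at h1 h2 h3 h4 h5 hfuel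
    rw [nrm] at hs
    simp only at hs
    split at hs
    · -- m < ta.length
      rename_i hgt
      simp only [List.mem_flatMap] at hs
      obtain ⟨r, hr, hsr⟩ := hs
      rcases ta with _ | ⟨a₀, a'⟩
      · simp at h3
      · simp only [List.length_cons] at hgt h3 h4 h5 hfuel
        have hb1 : 1 ≤ tb.length := by omega
        simp only [stepA, List.mem_cons, List.mem_singleton, List.not_mem_nil,
          or_false] at hr
        rcases hr with rfl | rfl
        · refine ih _ ?_ ⟨?_, ?_, ?_, ?_, ?_⟩ s hsr <;>
            simp only [meas, Atm.e_mk, Atm.a_mk, Atm.b_mk, List.length_append, List.length_cons, List.length_nil] <;> omega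
        · refine ih _ ?_ ⟨?_, ?_, ?_, ?_, ?_⟩ s hsr <;>
            simp only [meas, Atm.e_mk, Atm.a_mk, Atm.b_mk, List.length_append, List.length_cons, List.length_nil] <;> omega
    · split at hs
      · -- te.length + ta.length < m
        rename_i hle hlt
        simp only [List.mem_flatMap] at hs
        obtain ⟨r, hr, hsr⟩ := hs
        rcases tb with _ | ⟨b₀, b'⟩
        · simp at h4; omega
        · simp only [List.length_cons] at h4 h5 hfuel
          simp only [stepU, List.mem_cons, List.mem_singleton, List.not_mem_nil,
            or_false] at hr
          rcases hr with rfl | rfl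
          · refine ih _ ?_ ⟨?_, ?_, ?_, ?_, ?_⟩ s hsr <;>
              simp only [meas, Atm.e_mk, Atm.a_mk, Atm.b_mk, List.length_append, List.length_cons, List.length_nil] <;> omega
          · refine ih _ ?_ ⟨?_, ?_, ?_, ?_, ?_⟩ s hsr <;>
              simp only [meas, Atm.e_mk, Atm.a_mk, Atm.b_mk, List.length_append, List.length_cons, List.length_nil] <;> omega
      · rename_i hle hge
        simp only [List.mem_singleton] at hs
        subst hs
        exact ⟨h1, h2, (by omega : m - te.length ≤ ta.length),
          (by omega : ta.length ≤ m), h4⟩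

end Normalize

section Assemble

variable {N : ℕ} {Ω : Set (Euc N)} {A u : Euc N → ℝ}

theorem list_sum_sub {ι : Type*} (L : List ι) (f g : ι → ℝ) :
    (L.map f).sum - (L.map g).sum = (L.map (fun t => f t - g t)).sum := by
  induction L with
  | nil => simp
  | cons t L ih => simp only [List.map_cons, List.sum_cons, ← ih]; ring

theorem list_sum_filter_of_zero {ι : Type*} (L : List ι) (p : ι → Bool) (f : ι → ℝ)
    (h : ∀ t ∈ L, p t = false → f t = 0) :
    (L.map f).sum = ((L.filter p).map f).sum := by
  induction L with
  | nil => simp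
  | cons t L ih =>
    rcases hp : p t with _ | _
    · simp only [List.map_cons, List.sum_cons, List.filter_cons, hp]
      rw [h t (by simp) hp, ih (fun s hs => h s (by simp [hs]))]
      simp
    · simp only [List.map_cons, List.sum_cons, List.filter_cons, hp]
      rw [ih (fun s hs => h s (by simp [hs]))]
      simp

/-- shift the `u`-slot: atoms over `iterP l u` are atoms over `u` with `l` appended to `b`. -/
theorem aeval_shift (l : List (Fin N)) (t : Atm N) :
    aeval A (iterP l u) t = aeval A u ⟨t.e, t.a, t.b ++ l, t.c⟩ := by
  unfold aeval
  rw [iterP_append]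

def startList (N n : ℕ) : List (Atm N) :=
  (List.finRange N).flatMap (fun k =>
    ((phase1 N n).filter (fun t => !t.a.isEmpty)).map (fun t => ⟨[k], t.a, t.b ++ [k], t.c⟩))

theorem startList_pre (m : ℕ) (t : Atm N) (ht : t ∈ startList N (m - 1)) (hm : 1 ≤ m) :
    Pre m t := by
  simp only [startList, List.mem_flatMap, List.mem_map, List.mem_filter] at ht
  obtain ⟨k, -, s, ⟨hs, hsa⟩, rfl⟩ := ht
  obtain ⟨-, hlen⟩ := phase1_shape (m - 1) s hs
  have ha : s.a ≠ [] := by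
    intro h; rw [h] at hsa; simp at hsa
  have ha1 : 0 < s.a.length := List.length_pos_iff.mpr ha
  refine ⟨by simp, ?_, by show 1 ≤ s.a.length; omega, ?_, ?_⟩ <;> simp <;> omega

theorem F1 (hΩ : IsOpen Ω) (hA : ContDiffOn ℝ (⊤ : ℕ∞) A Ω) (hu : ContDiffOn ℝ (⊤ : ℕ∞) u Ω) (n : ℕ) :
    ∀ x ∈ Ω, (∑ k : Fin N, iterP [k] (lapIter n (fun y => A y * iterP [k] u y)) x)
      - (∑ k : Fin N, iterP [k] (fun y => A y * lapIter n (iterP [k] u) y) x)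
      = leval A u (startList N n) x := by
  intro x hx
  have hone : ContDiffOn ℝ (⊤ : ℕ∞) (fun _ : Euc N => (1:ℝ)) Ω := contDiffOn_const
  have key : ∀ k : Fin N,
      iterP [k] (lapIter n (fun y => A y * iterP [k] u y)) x
        - iterP [k] (fun y => A y * lapIter n (iterP [k] u) y) x
      = leval A u (((phase1 N n).filter (fun t => !t.a.isEmpty)).map
          (fun t => ⟨[k], t.a, t.b ++ [k], t.c⟩)) x := by
    intro k
    set g : Euc N → ℝ := iterP [k] u with hg
    have hgs : ContDiffOn ℝ (⊤ : ℕ∞) g Ω := iterP_contDiffOn hΩ hu [k]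
    set P := phase1 N n with hP
    set Pf := P.filter (fun t => !t.a.isEmpty) with hPf
    have hPe : ∀ t ∈ P, t.e = [] := fun t ht => (phase1_shape n t ht).1
    -- pointwise identities on Ω
    have hF : ∀ y ∈ Ω, lapIter n (fun z => A z * g z) y = leval A g P y :=
      M1 hΩ hA hgs n
    have hone_mul : (fun z => (1:ℝ) * g z) = g := by funext z; rw [one_mul]
    have hG : ∀ y ∈ Ω, A y * lapIter n g y
        = A y * leval (fun _ => (1:ℝ)) g P y := by
      intro y hy
      rw [← M1 hΩ hone hgs n y hy, hone_mul]
    -- the difference of the two levals equals leval over the filtered list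
    have hdiff : ∀ y ∈ Ω, leval A g P y - A y * leval (fun _ => (1:ℝ)) g P y
        = leval A g Pf y := by
      intro y hy
      unfold leval
      have h1 : A y * (P.map (fun t => aeval (fun _ => (1:ℝ)) g t y)).sum
          = (P.map (fun t => A y * aeval (fun _ => (1:ℝ)) g t y)).sum := by
        rw [List.sum_map_mul_left]
      rw [h1, list_sum_sub]
      rw [list_sum_filter_of_zero P (fun t => !t.a.isEmpty)
        (fun t => aeval A g t y - A y * aeval (fun _ => (1:ℝ)) g t y) ?_ ]
      · rw [hPf]
        apply congrArg
        apply List.map_congr_left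
        intro t htP
        rw [List.mem_filter] at htP
        have hte : t.e = [] := hPe t htP.1
        have hta : t.a ≠ [] := by simpa using htP.2
        have hzero : iterP t.a (fun _ : Euc N => (1:ℝ)) = fun _ => 0 := iterP_one t.a hta
        simp only [aeval, hte, hzero, iterP_nil]
        ring
      · intro t htP hta
        have hte : t.e = [] := hPe t htP
        have hta' : t.a = [] := by simpa using hta
        simp only [aeval, hte, hta', iterP_nil]
        ring
    -- smooth versions
    have hFs : ContDiffOn ℝ (⊤ : ℕ∞) (leval A g P) Ω := leval_contDiffOn hΩ hA hgs P
    have hGs : ContDiffOn ℝ (⊤ : ℕ∞) (fun y => A y * leval (fun _ => (1:ℝ)) g P y) Ω :=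
      hA.mul (leval_contDiffOn hΩ hone hgs P)
    have e1 : iterP [k] (lapIter n (fun y => A y * g y)) x
        = iterP [k] (leval A g P) x := iterP_congr hΩ hF [k] x hx
    have e2 : iterP [k] (fun y => A y * lapIter n g y) x
        = iterP [k] (fun y => A y * leval (fun _ => (1:ℝ)) g P y) x :=
      iterP_congr hΩ hG [k] x hx
    rw [e1, e2, ← iterP_sub hΩ hFs hGs [k] x hx,
      iterP_congr hΩ (fun y hy => hdiff y hy) [k] x hx,
      iterP_leval hΩ hA hgs [k] Pf x hx]
    unfold leval
    rw [List.map_map, List.map_map]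
    apply congrArg
    apply List.map_congr_left
    intro t htPf
    rw [List.mem_filter] at htPf
    have hte : t.e = [] := hPe t htPf.1
    show aeval A g ⟨[k] ++ t.e, t.a, t.b, t.c⟩ x = _
    rw [hte]
    show aeval A (iterP [k] u) ⟨[k], t.a, t.b, t.c⟩ x = _
    rw [aeval_shift [k] ⟨[k], t.a, t.b, t.c⟩]
    rfl
  rw [← Finset.sum_sub_distrib]
  simp only [key]
  unfold startList
  rw [leval_flatMap, Fin.sum_univ_def]

end Assemble

section Collapse

variable {N : ℕ}

theorem helper1 {n : ℕ} (Lst : List (Fin N)) (w : ℝ) :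
    (∑ f : Fin n → Fin N, if Lst = List.ofFn f then w else 0)
      = if Lst.length = n then w else 0 := by
  by_cases h : Lst.length = n
  · subst h
    rw [if_pos rfl, Finset.sum_eq_single Lst.get]
    · rw [if_pos (List.ofFn_get Lst).symm]
    · intro f _ hne
      rw [if_neg]
      intro hEq
      apply hne
      funext i
      have h2 := List.get_of_eq hEq i
      rw [h2, List.get_ofFn]
      congr 1
      try apply Fin.ext
      try simp
    · intro h'
      exact absurd (Finset.mem_univ _) h'
  · rw [if_neg h]
    apply Finset.sum_eq_zero
    intro f _
    rw [if_neg]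
    intro hEq
    exact h (by rw [hEq, List.length_ofFn])

theorem helperP (P : Prop) [Decidable P] {n : ℕ} (Lst : List (Fin N)) (w : ℝ) :
    (∑ f : Fin n → Fin N, if P ∧ Lst = List.ofFn f then w else 0)
      = if P ∧ Lst.length = n then w else 0 := by
  by_cases hP : P
  · simp only [hP, true_and]
    exact helper1 Lst w
  · simp [hP]

theorem helperNat (s : Finset ℕ) (a : ℕ) (g : ℕ → Prop) [DecidablePred g] (w : ℕ → ℝ) :
    (∑ j ∈ s, if g j ∧ a = j then w j else 0) = if a ∈ s ∧ g a then w a else 0 := by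
  have h1 : ∀ j ∈ s, (if g j ∧ a = j then w j else 0)
      = if a = j then (if g j then w j else 0) else 0 := by
    intro j _
    split_ifs with h h2 h3 <;> tauto
  rw [Finset.sum_congr rfl h1, Finset.sum_ite_eq s a (fun j => if g j then w j else 0)]
  split_ifs with h h2 h3 <;> tauto

theorem single_atom (m : ℕ) (w : ℝ) (t : Atm N) (ht : Post m t) :
    (∑ i ∈ Finset.Icc 1 (m-1), ∑ e : Fin i → Fin N, ∑ j ∈ Finset.Icc (m-i) m,
      ∑ a : Fin j → Fin N, ∑ b : Fin (2*m-i-j) → Fin N,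
        if t.e = List.ofFn e ∧ t.a = List.ofFn a ∧ t.b = List.ofFn b then w else 0) = w := by
  obtain ⟨h1, h2, h3, h4, h5⟩ := ht
  have hb : ∀ (i j : ℕ) (e : Fin i → Fin N) (a : Fin j → Fin N),
      (∑ b : Fin (2*m-i-j) → Fin N,
        if t.e = List.ofFn e ∧ t.a = List.ofFn a ∧ t.b = List.ofFn b then w else 0)
      = if (t.e = List.ofFn e ∧ t.a = List.ofFn a) ∧ t.b.length = 2*m-i-j then w else 0 := by
    intro i j e a
    rw [← helperP (t.e = List.ofFn e ∧ t.a = List.ofFn a) t.b w]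
    apply Finset.sum_congr rfl
    intro b _
    exact if_congr (by tauto) rfl rfl
  have ha : ∀ (i j : ℕ) (e : Fin i → Fin N),
      (∑ a : Fin j → Fin N,
        if (t.e = List.ofFn e ∧ t.a = List.ofFn a) ∧ t.b.length = 2*m-i-j then w else 0)
      = if (t.e = List.ofFn e ∧ t.b.length = 2*m-i-j) ∧ t.a.length = j then w else 0 := by
    intro i j e
    rw [← helperP (t.e = List.ofFn e ∧ t.b.length = 2*m-i-j) t.a w]
    apply Finset.sum_congr rfl
    intro a _
    exact if_congr (by tauto) rfl rfl
  have hj : ∀ (i : ℕ) (e : Fin i → Fin N),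
      (∑ j ∈ Finset.Icc (m-i) m,
        if (t.e = List.ofFn e ∧ t.b.length = 2*m-i-j) ∧ t.a.length = j then w else 0)
      = if t.a.length ∈ Finset.Icc (m-i) m ∧
          (t.e = List.ofFn e ∧ t.b.length = 2*m-i-t.a.length) then w else 0 := by
    intro i e
    rw [← helperNat (Finset.Icc (m-i) m) t.a.length
      (fun j => t.e = List.ofFn e ∧ t.b.length = 2*m-i-j) (fun _ => w)]
  have he : ∀ i : ℕ,
      (∑ e : Fin i → Fin N,
        if t.a.length ∈ Finset.Icc (m-i) m ∧
          (t.e = List.ofFn e ∧ t.b.length = 2*m-i-t.a.length) then w else 0)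
      = if (t.a.length ∈ Finset.Icc (m-i) m ∧ t.b.length = 2*m-i-t.a.length) ∧
          t.e.length = i then w else 0 := by
    intro i
    rw [← helperP (t.a.length ∈ Finset.Icc (m-i) m ∧ t.b.length = 2*m-i-t.a.length) t.e w]
    apply Finset.sum_congr rfl
    intro e _
    exact if_congr (by tauto) rfl rfl
  have hi :
      (∑ i ∈ Finset.Icc 1 (m-1),
        if (t.a.length ∈ Finset.Icc (m-i) m ∧ t.b.length = 2*m-i-t.a.length) ∧
          t.e.length = i then w else 0)
      = if t.e.length ∈ Finset.Icc 1 (m-1) ∧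
          (t.a.length ∈ Finset.Icc (m-t.e.length) m ∧
            t.b.length = 2*m-t.e.length-t.a.length) then w else 0 := by
    rw [← helperNat (Finset.Icc 1 (m-1)) t.e.length
      (fun i => t.a.length ∈ Finset.Icc (m-i) m ∧ t.b.length = 2*m-i-t.a.length) (fun _ => w)]
  calc (∑ i ∈ Finset.Icc 1 (m-1), ∑ e : Fin i → Fin N, ∑ j ∈ Finset.Icc (m-i) m,
      ∑ a : Fin j → Fin N, ∑ b : Fin (2*m-i-j) → Fin N,
        if t.e = List.ofFn e ∧ t.a = List.ofFn a ∧ t.b = List.ofFn b then w else 0)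
      = ∑ i ∈ Finset.Icc 1 (m-1),
          if (t.a.length ∈ Finset.Icc (m-i) m ∧ t.b.length = 2*m-i-t.a.length) ∧
            t.e.length = i then w else 0 := by
        apply Finset.sum_congr rfl
        intro i _
        rw [← he i]
        apply Finset.sum_congr rfl
        intro e _
        rw [← hj i e]
        apply Finset.sum_congr rfl
        intro j _
        rw [← ha i j e]
        apply Finset.sum_congr rfl
        intro a _
        exact hb i j e a
    _ = w := by
        rw [hi, if_pos]
        refine ⟨?_, ?_, ?_⟩
        · rw [Finset.mem_Icc]; omega
        · rw [Finset.mem_Icc]; omega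
        · omega

def cconst (m : ℕ) (LL : List (Atm N)) (i j : ℕ) (e : Fin i → Fin N) (a : Fin j → Fin N)
    (_b : Fin (2*m - i - j) → Fin N) : ℤ :=
  ((LL.filter (fun t =>
    decide (t.e = List.ofFn e ∧ t.a = List.ofFn a ∧ t.b = List.ofFn _b))).map Atm.c).sum

theorem collapse (m : ℕ) (v : List (Fin N) → List (Fin N) → List (Fin N) → ℝ)
    (LL : List (Atm N)) (hLL : ∀ t ∈ LL, Post m t) :
    (∑ i ∈ Finset.Icc 1 (m-1), ∑ e : Fin i → Fin N, ∑ j ∈ Finset.Icc (m-i) m,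
      ∑ a : Fin j → Fin N, ∑ b : Fin (2*m-i-j) → Fin N,
        (cconst m LL i j e a b : ℝ) * v (List.ofFn e) (List.ofFn a) (List.ofFn b))
    = (LL.map (fun t => (t.c : ℝ) * v t.e t.a t.b)).sum := by
  induction LL with
  | nil => simp [cconst]
  | cons t L ih =>
    have hPost := hLL t (by simp)
    have hc : ∀ (i j : ℕ) (e : Fin i → Fin N) (a : Fin j → Fin N)
        (b : Fin (2*m-i-j) → Fin N), (cconst m (t::L) i j e a b : ℝ)
        = (if t.e = List.ofFn e ∧ t.a = List.ofFn a ∧ t.b = List.ofFn b then (t.c:ℝ) else 0)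
          + (cconst m L i j e a b : ℝ) := by
      intro i j e a b
      unfold cconst
      rw [List.filter_cons]
      by_cases h : t.e = List.ofFn e ∧ t.a = List.ofFn a ∧ t.b = List.ofFn b
      · simp [h]
      · simp [h]
    simp only [hc, add_mul, Finset.sum_add_distrib]
    rw [ih (fun s hs => hLL s (by simp [hs]))]
    simp only [List.map_cons, List.sum_cons]
    congr 1
    have hterm : ∀ (i j : ℕ) (e : Fin i → Fin N) (a : Fin j → Fin N)
        (b : Fin (2*m-i-j) → Fin N),
        (if t.e = List.ofFn e ∧ t.a = List.ofFn a ∧ t.b = List.ofFn b then (t.c:ℝ) else 0)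
          * v (List.ofFn e) (List.ofFn a) (List.ofFn b)
        = if t.e = List.ofFn e ∧ t.a = List.ofFn a ∧ t.b = List.ofFn b
            then (t.c:ℝ) * v t.e t.a t.b else 0 := by
      intro i j e a b
      split_ifs with h
      · obtain ⟨he, ha, hb⟩ := h
        rw [← he, ← ha, ← hb]
      · ring
    simp only [hterm]
    exact single_atom m ((t.c:ℝ) * v t.e t.a t.b) t hPost

end Collapse

/-- Leibniz-type expansion of `δΔ^{m-1}(A du)`, with universal constants. -/
theorem stmt8 (m : ℕ) (hm : 1 ≤ m) :
    ∃ c : (i : ℕ) → (j : ℕ) → (Fin i → Fin (2 * m)) → (Fin j → Fin (2 * m)) →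
        (Fin (2 * m - i - j) → Fin (2 * m)) → ℤ,
      ∀ (Ω : Set (Euc (2 * m))), IsOpen Ω →
        ∀ (A u : Euc (2 * m) → ℝ), ContDiffOn ℝ (⊤ : ℕ∞) A Ω → ContDiffOn ℝ (⊤ : ℕ∞) u Ω →
          ∀ x ∈ Ω,
            -- δ Δ^{m-1} (A du)
            (∑ k : Fin (2 * m),
              iterP [k] (lapIter (m - 1) (fun y => A y * iterP [k] u y)) x)
            =
            -- δ (A Δ^{m-1} du)
            (∑ k : Fin (2 * m),
              iterP [k] (fun y => A y * lapIter (m - 1) (iterP [k] u) y) x)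
            +
            -- Σ_{i=1}^{m-1} δ^i ( Σ_{j=m-i}^{m} c_{ij} ∇^j A · ∇^{2m-i-j} u )
            ∑ i ∈ Finset.Icc 1 (m - 1), ∑ e : Fin i → Fin (2 * m),
              iterP (List.ofFn e)
                (fun y => ∑ j ∈ Finset.Icc (m - i) m,
                  ∑ a : Fin j → Fin (2 * m), ∑ b : Fin (2 * m - i - j) → Fin (2 * m),
                    (c i j e a b : ℝ) * iterP (List.ofFn a) A y * iterP (List.ofFn b) u y) x := by
  classical
  set LL : List (Atm (2*m)) :=
    (startList (2*m) (m-1)).flatMap (fun t => nrm m (meas m t) t) with hLLdef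
  refine ⟨fun i j e a b => cconst m LL i j e a b, ?_⟩
  intro Ω hΩ A u hA hu x hx
  have hPost : ∀ s ∈ LL, Post m s := by
    intro s hs
    rw [hLLdef, List.mem_flatMap] at hs
    obtain ⟨t, htL, hst⟩ := hs
    exact nrm_post m (meas m t) t le_rfl (startList_pre m t htL hm) s hst
  have hstart : ∀ y ∈ Ω, leval A u (startList (2*m) (m-1)) y = leval A u LL y := by
    intro y hy
    rw [hLLdef, leval_flatMap]
    unfold leval
    apply congrArg
    apply List.map_congr_left
    intro t _
    exact nrm_eval hΩ hA hu m (meas m t) t y hy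
  have hdiff := F1 hΩ hA hu (m-1) x hx
  rw [hstart x hx] at hdiff
  set v : List (Fin (2*m)) → List (Fin (2*m)) → List (Fin (2*m)) → ℝ :=
    fun ee aa bb => iterP ee (fun y => iterP aa A y * iterP bb u y) x with hv
  have pull : ∀ (i : ℕ) (e : Fin i → Fin (2*m)),
      iterP (List.ofFn e) (fun y => ∑ j ∈ Finset.Icc (m-i) m, ∑ a : Fin j → Fin (2*m),
        ∑ b : Fin (2*m-i-j) → Fin (2*m),
          (cconst m LL i j e a b : ℝ) * iterP (List.ofFn a) A y * iterP (List.ofFn b) u y) x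
      = ∑ j ∈ Finset.Icc (m-i) m, ∑ a : Fin j → Fin (2*m), ∑ b : Fin (2*m-i-j) → Fin (2*m),
          (cconst m LL i j e a b : ℝ) * v (List.ofFn e) (List.ofFn a) (List.ofFn b) := by
    intro i e
    have hsm3 : ∀ (j : ℕ) (a : Fin j → Fin (2*m)) (b : Fin (2*m-i-j) → Fin (2*m)),
        ContDiffOn ℝ (⊤ : ℕ∞) (fun y => (cconst m LL i j e a b : ℝ)
          * iterP (List.ofFn a) A y * iterP (List.ofFn b) u y) Ω :=
      fun j a b => (contDiffOn_const.mul (iterP_contDiffOn hΩ hA _)).mul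
        (iterP_contDiffOn hΩ hu _)
    have hsm2 : ∀ (j : ℕ) (a : Fin j → Fin (2*m)),
        ContDiffOn ℝ (⊤ : ℕ∞) (fun y => ∑ b : Fin (2*m-i-j) → Fin (2*m),
          (cconst m LL i j e a b : ℝ)
            * iterP (List.ofFn a) A y * iterP (List.ofFn b) u y) Ω :=
      fun j a => ContDiffOn.sum (fun b _ => hsm3 j a b)
    have hsm1 : ∀ (j : ℕ),
        ContDiffOn ℝ (⊤ : ℕ∞) (fun y => ∑ a : Fin j → Fin (2*m), ∑ b : Fin (2*m-i-j) → Fin (2*m),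
          (cconst m LL i j e a b : ℝ)
            * iterP (List.ofFn a) A y * iterP (List.ofFn b) u y) Ω :=
      fun j => ContDiffOn.sum (fun a _ => hsm2 j a)
    rw [iterP_finsetSum hΩ _ hsm1 (Finset.Icc (m-i) m) (List.ofFn e) x hx]
    apply Finset.sum_congr rfl
    intro j _
    rw [iterP_finsetSum hΩ _ (hsm2 j) Finset.univ (List.ofFn e) x hx]
    apply Finset.sum_congr rfl
    intro a _
    rw [iterP_finsetSum hΩ _ (hsm3 j a) Finset.univ (List.ofFn e) x hx]
    apply Finset.sum_congr rfl
    intro b _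
    have hre : (fun y => (cconst m LL i j e a b : ℝ)
        * iterP (List.ofFn a) A y * iterP (List.ofFn b) u y)
        = (fun y => (cconst m LL i j e a b : ℝ)
        * (iterP (List.ofFn a) A y * iterP (List.ofFn b) u y)) := by
      funext y; ring
    rw [hre, iterP_const_mul hΩ (prod_contDiffOn hΩ hA hu _ _) _ (List.ofFn e) x hx]
  have hcor : (∑ i ∈ Finset.Icc 1 (m - 1), ∑ e : Fin i → Fin (2 * m),
      iterP (List.ofFn e)
        (fun y => ∑ j ∈ Finset.Icc (m - i) m,
          ∑ a : Fin j → Fin (2 * m), ∑ b : Fin (2 * m - i - j) → Fin (2 * m),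
            (cconst m LL i j e a b : ℝ) * iterP (List.ofFn a) A y
              * iterP (List.ofFn b) u y) x)
      = leval A u LL x := by
    calc (∑ i ∈ Finset.Icc 1 (m - 1), ∑ e : Fin i → Fin (2 * m),
        iterP (List.ofFn e)
          (fun y => ∑ j ∈ Finset.Icc (m - i) m,
            ∑ a : Fin j → Fin (2 * m), ∑ b : Fin (2 * m - i - j) → Fin (2 * m),
              (cconst m LL i j e a b : ℝ) * iterP (List.ofFn a) A y
                * iterP (List.ofFn b) u y) x)
        = ∑ i ∈ Finset.Icc 1 (m-1), ∑ e : Fin i → Fin (2*m), ∑ j ∈ Finset.Icc (m-i) m,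
            ∑ a : Fin j → Fin (2*m), ∑ b : Fin (2*m-i-j) → Fin (2*m),
              (cconst m LL i j e a b : ℝ) * v (List.ofFn e) (List.ofFn a) (List.ofFn b) := by
          apply Finset.sum_congr rfl
          intro i _
          apply Finset.sum_congr rfl
          intro e _
          exact pull i e
      _ = (LL.map (fun t => (t.c : ℝ) * v t.e t.a t.b)).sum := collapse m v LL hPost
      _ = leval A u LL x := rfl
  rw [hcor]
  linarith [hdiff]
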